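/- arXiv:1004.0430 — 2 statements merged into one kernel-verified Lean document; each statement's English description precedes it below -/
import Mathlib

section
/- For every integer V ≥ 2 and every integer x ≥ 3, setting W = V^(x+2) - 1, the identity (W^(x+2))^x + (W^(x+1))^(x+1) = (W^x · V)^(x+2) holds. -/
theorem stmt_0 (V x : ℕ) (hV : 2 ≤ V) (hx : 3 ≤ x) (W : ℕ) (hW : W = V ^ (x + 2) - 1) :
    (W ^ (x + 2)) ^ x + (W ^ (x + 1)) ^ (x + 1) = (W ^ x * V) ^ (x + 2) := by
  have hV1 : 1 ≤ V ^ (x + 2) := Nat.one_le_pow _ _ (by omega)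
  have h1 : W + 1 = V ^ (x + 2) := by omega
  have he : (x + 1) * (x + 1) = (x + 2) * x + 1 := by ring
  rw [mul_pow, ← pow_mul, ← pow_mul, ← pow_mul, ← h1, he, pow_succ,
    Nat.mul_comm x (x + 2)]
  ring
end

section
/- For every integer V ≥ 2 and every integer x ≥ 3, with W = V^(x+2) - 1, the triple A = W^(x+2), B = W^(x+1), C = W^x · V satisfies min(A, B, C) / gcd(A, B, C) = V. -/
/-!
`W = V^(x+2) - 1` is coprime to `V` (it is one less than a power of `V`) and exceeds `V`.
Hence the minimum of the triple is `C = W^x * V`, the gcd is `W^x`, and the quotient is `V`.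
-/

theorem Nat.coprime_pow_sub_one_self {V n : ℕ} (hV : 0 < V) (hn : n ≠ 0) :
    Nat.Coprime (V ^ n - 1) V := by
  have h : Nat.Coprime (V ^ n - 1) (V ^ n - 1 + 1) := by simp
  rw [Nat.sub_add_cancel (Nat.one_le_pow n V hV)] at h
  exact (Nat.coprime_pow_right_iff (Nat.pos_of_ne_zero hn) _ _).mp h

theorem Nat.lt_pow_sub_one {V n : ℕ} (hV : 2 ≤ V) (hn : 2 ≤ n) : V < V ^ n - 1 := by
  have h : V ^ 2 ≤ V ^ n := Nat.pow_le_pow_right (by omega) hn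
  have h2 : V + 2 ≤ V ^ 2 := by nlinarith
  omega

section PeggTriple

variable {W V : ℕ} (x : ℕ)

theorem pegg_triple_min (hVW : V < W) :
    min (W ^ (x + 2)) (min (W ^ (x + 1)) (W ^ x * V)) = W ^ x * V := by
  have hCB : W ^ x * V < W ^ (x + 1) := by
    rw [pow_succ]
    exact Nat.mul_lt_mul_of_pos_left hVW (Nat.pow_pos (by omega))
  have hBA : W ^ (x + 1) ≤ W ^ (x + 2) := Nat.pow_le_pow_right (by omega) (by omega)
  omega

theorem pegg_triple_gcd (hWV : Nat.Coprime W V) :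
    Nat.gcd (W ^ (x + 2)) (Nat.gcd (W ^ (x + 1)) (W ^ x * V)) = W ^ x := by
  have hBC : Nat.gcd (W ^ (x + 1)) (W ^ x * V) = W ^ x := by
    rw [pow_succ, Nat.gcd_mul_left, hWV.gcd_eq_one, mul_one]
  rw [hBC]
  exact Nat.gcd_eq_right (pow_dvd_pow W (by omega))

theorem pegg_triple_div (hWV : Nat.Coprime W V) (hVW : V < W) :
    min (W ^ (x + 2)) (min (W ^ (x + 1)) (W ^ x * V)) /
      Nat.gcd (W ^ (x + 2)) (Nat.gcd (W ^ (x + 1)) (W ^ x * V)) = V := by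
  rw [pegg_triple_min x hVW, pegg_triple_gcd x hWV,
    Nat.mul_div_cancel_left _ (Nat.pow_pos (by omega))]

end PeggTriple

theorem stmt_3_general (V x : ℕ) (hV : 2 ≤ V) (W A B C : ℕ)
    (hW : W = V ^ (x + 2) - 1)
    (hA : A = W ^ (x + 2)) (hB : B = W ^ (x + 1)) (hC : C = W ^ x * V) :
    min A (min B C) / Nat.gcd A (Nat.gcd B C) = V := by
  subst hW hA hB hC
  exact pegg_triple_div x (Nat.coprime_pow_sub_one_self (by omega) (by omega))
    (Nat.lt_pow_sub_one hV (by omega))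

theorem stmt_3 (V x : ℕ) (hV : 2 ≤ V) (hx : 3 ≤ x) (W A B C : ℕ)
    (hW : W = V ^ (x + 2) - 1)
    (hA : A = W ^ (x + 2)) (hB : B = W ^ (x + 1)) (hC : C = W ^ x * V) :
    min A (min B C) / Nat.gcd A (Nat.gcd B C) = V :=
  stmt_3_general V x hV W A B C hW hA hB hC
end
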